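/- arXiv:1106.4753 — 2 statements merged into one kernel-verified Lean document; each statement's English description precedes it below -/
import Mathlib

section
/- Let R, S, T be rows in N^n. Compute S·T = A·B, then R·A = C·D (left-first reduction), and also R·S = G·H, then H·T = I·J (right-first reduction), using the vector insertion algorithm. Prove that A_p ≤ I_p for all 1 ≤ p ≤ n, where the subscript denotes partial sums. -/
/-!
Both partial sums are partial sums `X_p` of a bumped row with the same second row `T`:
`A_p = X_p` for `S·T` and `I_p = X_p` for `H·T`. The recursion `X_{p+1} = min(T_p, X_p + w_{p+1})`
is monotone in the first row `w`, and `H ≥ S` entrywise because `h_m = r_m + s_m - g_m` with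
`g_m ≤ r_m`.
-/

open Finset

/-- Partial sum `Φ_p = φ_1 + ⋯ + φ_p` of a multiplicity vector. -/
def PS (f : ℕ → ℕ) (p : ℕ) : ℕ := ∑ i ∈ Finset.Icc 1 p, f i

/-- Partial sums `X_p` of the bumped row in the vector insertion `W·Z = X·Y`:
`X_0 = X_1 = 0`, `X_{p+1} = min(Z_p, X_p + w_{p+1})`. -/
def capX (W Z : ℕ → ℕ) : ℕ → ℕ
  | 0 => 0
  | p + 1 => if p = 0 then 0 else min (PS Z p) (capX W Z p + W (p + 1))

/-- Component `x_p = X_p - X_{p-1} = min(Z_{p-1} - X_{p-1}, w_p)` (with `x_1 = 0`). -/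
def xcomp (W Z : ℕ → ℕ) (p : ℕ) : ℕ := capX W Z p - capX W Z (p - 1)

/-- Component `y_q = w_q + z_q - x_q`. -/
def ycomp (W Z : ℕ → ℕ) (q : ℕ) : ℕ := W q + Z q - xcomp W Z q

/-- `A` from `S·T = A·B`. -/
def rowA (S T : ℕ → ℕ) : ℕ → ℕ := xcomp S T
/-- `B` from `S·T = A·B`. -/
def rowB (S T : ℕ → ℕ) : ℕ → ℕ := ycomp S T
/-- `C` from `R·A = C·D`. -/
def rowC (R S T : ℕ → ℕ) : ℕ → ℕ := xcomp R (rowA S T)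
/-- `D` from `R·A = C·D`. -/
def rowD (R S T : ℕ → ℕ) : ℕ → ℕ := ycomp R (rowA S T)
/-- `E` from `D·B = E·F`. -/
def rowE (R S T : ℕ → ℕ) : ℕ → ℕ := xcomp (rowD R S T) (rowB S T)
/-- `F` from `D·B = E·F`. -/
def rowF (R S T : ℕ → ℕ) : ℕ → ℕ := ycomp (rowD R S T) (rowB S T)
/-- `G` from `R·S = G·H`. -/
def rowG (R S : ℕ → ℕ) : ℕ → ℕ := xcomp R S
/-- `H` from `R·S = G·H`. -/
def rowH (R S : ℕ → ℕ) : ℕ → ℕ := ycomp R S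
/-- `I` from `H·T = I·J`. -/
def rowI (R S T : ℕ → ℕ) : ℕ → ℕ := xcomp (rowH R S) T
/-- `J` from `H·T = I·J`. -/
def rowJ (R S T : ℕ → ℕ) : ℕ → ℕ := ycomp (rowH R S) T
/-- `K` from `G·I = K·L`. -/
def rowK (R S T : ℕ → ℕ) : ℕ → ℕ := xcomp (rowG R S) (rowI R S T)
/-- `L` from `G·I = K·L`. -/
def rowL (R S T : ℕ → ℕ) : ℕ → ℕ := ycomp (rowG R S) (rowI R S T)

lemma PS_le_PS_succ (f : ℕ → ℕ) (p : ℕ) : PS f p ≤ PS f (p + 1) :=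
  sum_le_sum_of_subset (Icc_subset_Icc le_rfl p.le_succ)

lemma capX_succ_succ (W Z : ℕ → ℕ) (p : ℕ) :
    capX W Z (p + 2) = min (PS Z (p + 1)) (capX W Z (p + 1) + W (p + 2)) :=
  if_neg p.succ_ne_zero

lemma capX_succ_le_PS (W Z : ℕ → ℕ) (p : ℕ) : capX W Z (p + 1) ≤ PS Z p := by
  cases p with
  | zero => exact Nat.zero_le _
  | succ q => exact (capX_succ_succ W Z q).trans_le (min_le_left _ _)

lemma capX_monotone (W Z : ℕ → ℕ) : Monotone (capX W Z) := by
  refine monotone_nat_of_le_succ fun p => ?_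
  cases p with
  | zero => exact Nat.zero_le _
  | succ q =>
    rw [capX_succ_succ]
    exact le_min ((capX_succ_le_PS W Z q).trans (PS_le_PS_succ Z q)) (Nat.le_add_right _ _)

lemma PS_xcomp (W Z : ℕ → ℕ) : PS (xcomp W Z) = capX W Z := by
  funext p
  induction p with
  | zero => rfl
  | succ q ih =>
    have hmono : capX W Z q ≤ capX W Z (q + 1) := capX_monotone W Z (Nat.le_add_right q 1)
    rw [PS, sum_Icc_succ_top (Nat.succ_le_succ q.zero_le), ← PS, ih, xcomp, Nat.add_sub_cancel]
    omega

lemma capX_mono_left {W W' : ℕ → ℕ} (h : W ≤ W') (Z : ℕ → ℕ) : capX W Z ≤ capX W' Z := by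
  intro p
  induction p with
  | zero => exact le_rfl
  | succ q ih =>
    cases q with
    | zero => exact le_rfl
    | succ r =>
      rw [capX_succ_succ, capX_succ_succ]
      exact min_le_min le_rfl (Nat.add_le_add ih (h _))

lemma xcomp_le (W Z : ℕ → ℕ) : xcomp W Z ≤ W := by
  rintro (_ | _ | p)
  · exact Nat.zero_le _
  · exact Nat.zero_le _
  · have hmin := min_le_right (PS Z (p + 1)) (capX W Z (p + 1) + W (p + 2))
    show capX W Z (p + 2) - capX W Z (p + 1) ≤ W (p + 2)
    rw [capX_succ_succ]
    omega

lemma le_ycomp (W Z : ℕ → ℕ) : Z ≤ ycomp W Z := fun q => by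
  have hx : xcomp W Z q ≤ W q := xcomp_le W Z q
  show Z q ≤ W q + Z q - xcomp W Z q
  omega

/-- With `S·T = A·B`, `R·A = C·D` and `R·S = G·H`, `H·T = I·J`,
one has `A_p ≤ I_p` for all `1 ≤ p ≤ n`. -/
theorem A_le_I (n : ℕ) (R S T : ℕ → ℕ) :
    ∀ p, 1 ≤ p → p ≤ n → PS (rowA S T) p ≤ PS (rowI R S T) p := by
  intro p _ _
  rw [rowA, rowI, PS_xcomp, PS_xcomp]
  exact capX_mono_left (le_ycomp R S) T p
end

section
/- Prove that for any two rows R, S on the alphabet {1,...,n}, there exist unique rows R', S' (with R' possibly empty) such that R·S ≡ R'·S' in the plactic monoid and R'·S' is a Young tableau, and that R', S' are given by the vector insertion algorithm applied to (R, S). -/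
open Finset

/-- A row: a nondecreasing word. -/
def IsRow (r : List ℕ) : Prop := List.Pairwise (· ≤ ·) r

/-- A row `R` dominates a row `S`. -/
def Dominates (R S : List ℕ) : Prop :=
  R.length ≤ S.length ∧ ∀ i < R.length, S.getD i 0 < R.getD i 0

/-- One application of a Knuth relation inside a word. -/
inductive KnuthStep : List ℕ → List ℕ → Prop
  | left (u v : List ℕ) (x y z : ℕ) (h1 : x ≤ y) (h2 : y < z) :
      KnuthStep (u ++ [x, z, y] ++ v) (u ++ [z, x, y] ++ v)
  | right (u v : List ℕ) (x y z : ℕ) (h1 : x < y) (h2 : y ≤ z) :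
      KnuthStep (u ++ [y, x, z] ++ v) (u ++ [y, z, x] ++ v)

/-- The plactic congruence. -/
def PlacticEq : List ℕ → List ℕ → Prop := Relation.EqvGen KnuthStep

/-!
Existence: row-insert the letters of `S` one at a time into `R`. They arrive in increasing
order, so every bumped letter can be appended to the first row and the result stays a tableau
with two rows.

Uniqueness and the formula: for every `k`, the maximal length of a row of letters `≤ k` among
the subwords of a word is invariant under the Knuth relations (Greene). For a tableau `R'·S'`
it is the number of letters `≤ k` in `S'`. For `R·S`, taking the letters `≤ t` of `R` and the
letters in `[t, k]` of `S` gives `PS W t + PS Z k - PS Z (t - 1)`, and the recursion defining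
`capX` computes `capX W Z k = min_{1 ≤ t ≤ k} (PS W k - PS W t + PS Z (t - 1))`. So the
multiplicities of `S'`, and then those of `R'`, are forced, and a row is determined by its
multiplicities.
-/

theorem KnuthStep.perm {w w' : List ℕ} (h : KnuthStep w w') : w.Perm w' := by
  cases h with
  | left u v x y z =>
    simpa only [List.append_assoc] using
      ((List.Perm.swap' z x (List.Perm.refl [y])).append_right v).append_left u
  | right u v x y z =>
    simpa only [List.append_assoc] using
      ((List.Perm.cons y (List.Perm.swap' z x (List.Perm.refl []))).append_right v).append_left u

theorem KnuthStep.append {w w' : List ℕ} (a b : List ℕ) (h : KnuthStep w w') :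
    KnuthStep (a ++ w ++ b) (a ++ w' ++ b) := by
  cases h with
  | left u v x y z h1 h2 =>
    simpa only [List.append_assoc] using KnuthStep.left (a ++ u) (v ++ b) x y z h1 h2
  | right u v x y z h1 h2 =>
    simpa only [List.append_assoc] using KnuthStep.right (a ++ u) (v ++ b) x y z h1 h2

namespace PlacticEq

theorem of_knuthStep {w w' : List ℕ} (h : KnuthStep w w') : PlacticEq w w' :=
  Relation.EqvGen.rel _ _ h

theorem refl (w : List ℕ) : PlacticEq w w := Relation.EqvGen.refl _

theorem symm {w w' : List ℕ} (h : PlacticEq w w') : PlacticEq w' w :=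
  Relation.EqvGen.symm _ _ h

theorem trans {u v w : List ℕ} (h₁ : PlacticEq u v) (h₂ : PlacticEq v w) : PlacticEq u w :=
  Relation.EqvGen.trans _ _ _ h₁ h₂

theorem eq_of_knuthStep {β : Sort*} (f : List ℕ → β)
    (hf : ∀ w w', KnuthStep w w' → f w = f w') {w w' : List ℕ} (h : PlacticEq w w') :
    f w = f w' :=
  congrArg (Quot.lift f hf) (Quot.eqvGen_sound h)

theorem append {w w' : List ℕ} (a b : List ℕ) (h : PlacticEq w w') :
    PlacticEq (a ++ w ++ b) (a ++ w' ++ b) :=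
  Quot.eqvGen_exact <| h.eq_of_knuthStep (fun w => Quot.mk KnuthStep (a ++ w ++ b))
    fun _ _ hs => Quot.sound (hs.append a b)

theorem append_left {w w' : List ℕ} (a : List ℕ) (h : PlacticEq w w') :
    PlacticEq (a ++ w) (a ++ w') := by
  simpa using h.append a []

theorem perm {w w' : List ℕ} (h : PlacticEq w w') : w.Perm w' :=
  Multiset.coe_eq_coe.1 <| h.eq_of_knuthStep (fun w => (w : Multiset ℕ))
    fun _ _ hs => Multiset.coe_eq_coe.2 hs.perm

theorem forall_mem {w w' : List ℕ} {p : ℕ → Prop} (h : PlacticEq w w') (hw : ∀ a ∈ w, p a) :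
    ∀ a ∈ w', p a :=
  fun a ha => hw a (h.perm.mem_iff.2 ha)

end PlacticEq

theorem dominates_nil (B : List ℕ) : Dominates [] B := ⟨Nat.zero_le _, by simp⟩

theorem dominates_of_eq_nil_or {A B : List ℕ} (h : A = [] ∨ Dominates A B) : Dominates A B :=
  h.elim (fun hA => hA ▸ dominates_nil B) id

theorem not_dominates_cons_nil (a : ℕ) (A : List ℕ) : ¬ Dominates (a :: A) [] := by
  simp [Dominates]

theorem dominates_cons_cons {a b : ℕ} {A B : List ℕ} :
    Dominates (a :: A) (b :: B) ↔ b < a ∧ Dominates A B := by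
  simp only [Dominates, List.length_cons, Nat.add_le_add_iff_right, Nat.forall_lt_succ_left,
    List.getD_cons_zero, List.getD_cons_succ]
  tauto

theorem Dominates.append_right {A B : List ℕ} (h : Dominates A B) (C : List ℕ) :
    Dominates A (B ++ C) := by
  induction A generalizing B with
  | nil => exact dominates_nil _
  | cons a A ih =>
    cases B with
    | nil => exact absurd h (not_dominates_cons_nil a A)
    | cons b B =>
      rw [dominates_cons_cons] at h
      exact dominates_cons_cons.2 ⟨h.1, ih h.2⟩

theorem Dominates.of_append_right {A B C : List ℕ} (h : Dominates A (B ++ C))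
    (hlen : A.length ≤ B.length) : Dominates A B := by
  induction A generalizing B with
  | nil => exact dominates_nil _
  | cons a A ih =>
    cases B with
    | nil => simp at hlen
    | cons b B =>
      rw [List.cons_append, dominates_cons_cons] at h
      exact dominates_cons_cons.2 ⟨h.1, ih h.2 (by simpa using hlen)⟩

theorem Dominates.append_singleton {A B : List ℕ} {b : ℕ} (h : Dominates A B)
    (hlen : A.length < B.length) (hb : ∀ c ∈ B, c < b) : Dominates (A ++ [b]) B := by
  induction A generalizing B with
  | nil =>
    obtain ⟨c, B, rfl⟩ := List.exists_cons_of_length_pos hlen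
    exact dominates_cons_cons.2 ⟨hb c (by simp), dominates_nil _⟩
  | cons a A ih =>
    cases B with
    | nil => simp at hlen
    | cons c B =>
      rw [dominates_cons_cons] at h
      exact dominates_cons_cons.2
        ⟨h.1, ih h.2 (by simpa using hlen) fun x hx => hb x (List.mem_cons_of_mem c hx)⟩

theorem Dominates.countP_le {A B : List ℕ} (h : Dominates A B) (t : ℕ) :
    A.countP (· ≤ t) ≤ B.countP (· < t) := by
  induction A generalizing B with
  | nil => simp
  | cons a A ih =>
    cases B with
    | nil => exact absurd h (not_dominates_cons_nil a A)
    | cons b B =>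
      rw [dominates_cons_cons] at h
      have := ih h.2
      simp only [List.countP_cons, decide_eq_true_eq]
      split_ifs <;> omega

open scoped Classical in
noncomputable def maxRowLength (k : ℕ) (w : List ℕ) : ℕ :=
  Nat.findGreatest (fun m => ∃ l, l.Sublist w ∧ IsRow l ∧ (∀ a ∈ l, a ≤ k) ∧ l.length = m)
    w.length

open scoped Classical in
theorem le_maxRowLength {k : ℕ} {w l : List ℕ} (hl : l.Sublist w) (hrow : IsRow l)
    (hk : ∀ a ∈ l, a ≤ k) : l.length ≤ maxRowLength k w :=
  Nat.le_findGreatest hl.length_le ⟨l, hl, hrow, hk, rfl⟩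

open scoped Classical in
theorem exists_maxRowLength (k : ℕ) (w : List ℕ) :
    ∃ l, l.Sublist w ∧ IsRow l ∧ (∀ a ∈ l, a ≤ k) ∧ l.length = maxRowLength k w :=
  Nat.findGreatest_spec (P := fun m => ∃ l, l.Sublist w ∧ IsRow l ∧ (∀ a ∈ l, a ≤ k) ∧
    l.length = m) (Nat.zero_le _) ⟨[], List.nil_sublist _, List.Pairwise.nil, by simp, rfl⟩

def BoundedBy (l' l : List ℕ) : Prop := ∀ x ∈ l', (∃ a ∈ l, a ≤ x) ∧ ∃ b ∈ l, x ≤ b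

theorem BoundedBy.refl (l : List ℕ) : BoundedBy l l :=
  fun x hx => ⟨⟨x, hx, le_rfl⟩, x, hx, le_rfl⟩

def RowsFitInto (m m' : List ℕ) : Prop :=
  ∀ l, l.Sublist m → IsRow l →
    ∃ l', l'.Sublist m' ∧ IsRow l' ∧ l'.length = l.length ∧ BoundedBy l' l

theorem RowsFitInto.maxRowLength_le {m m' : List ℕ} (h : RowsFitInto m m') (k : ℕ)
    (u v : List ℕ) : maxRowLength k (u ++ m ++ v) ≤ maxRowLength k (u ++ m' ++ v) := by
  obtain ⟨l, hl, hrow, hk, hlen⟩ := exists_maxRowLength k (u ++ m ++ v)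
  obtain ⟨l12, l3, rfl, h12, h3⟩ := List.sublist_append_iff.1 hl
  obtain ⟨l1, l2, rfl, h1, h2⟩ := List.sublist_append_iff.1 h12
  simp only [IsRow, List.pairwise_append, List.mem_append] at hrow
  obtain ⟨⟨r1, r2, r12⟩, r3, r123⟩ := hrow
  obtain ⟨l2', h2', r2', hlen', hb⟩ := h l2 h2 r2
  have hrow' : IsRow (l1 ++ l2' ++ l3) := by
    simp only [IsRow, List.pairwise_append, List.mem_append]
    refine ⟨⟨r1, r2', fun a ha x hx => ?_⟩, r3, ?_⟩
    · obtain ⟨⟨a', ha', hle⟩, -⟩ := hb x hx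
      exact (r12 a ha a' ha').trans hle
    · rintro x (hx | hx) c hc
      · exact r123 x (Or.inl hx) c hc
      · obtain ⟨-, b, hb', hle⟩ := hb x hx
        exact hle.trans (r123 b (Or.inr hb') c hc)
  have hk' : ∀ a ∈ l1 ++ l2' ++ l3, a ≤ k := by
    simp only [List.mem_append]
    rintro a ((ha | ha) | ha)
    · exact hk a (by simp [ha])
    · obtain ⟨-, b, hb', hle⟩ := hb a ha
      exact hle.trans (hk b (by simp [hb']))
    · exact hk a (by simp [ha])
  rw [← hlen]
  simpa [hlen'] using le_maxRowLength ((h1.append h2').append h3) hrow' hk'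

theorem eq_of_sublist_triple {l : List ℕ} {a b c : ℕ} (h : l.Sublist [a, b, c]) :
    l = [] ∨ l = [a] ∨ l = [b] ∨ l = [c] ∨
    l = [a, b] ∨ l = [a, c] ∨ l = [b, c] ∨ l = [a, b, c] := by
  have h2 := List.mem_sublists.2 h
  simp only [List.sublists, List.foldr_cons, List.foldr_nil, List.flatMap_cons, List.flatMap_nil,
    List.append_nil, List.cons_append, List.nil_append, List.mem_cons, List.not_mem_nil,
    or_false] at h2
  tauto

theorem rowsFitInto_knuth_left {x y z : ℕ} (h1 : x ≤ y) (h2 : y < z) :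
    RowsFitInto [x, z, y] [z, x, y] ∧ RowsFitInto [z, x, y] [x, z, y] := by
  constructor <;> intro l hl hrow <;>
    rcases eq_of_sublist_triple hl with rfl | rfl | rfl | rfl | rfl | rfl | rfl | rfl <;>
    first
    | (simp [IsRow] at hrow; omega)
    | exact ⟨_, by simp, hrow, rfl, BoundedBy.refl _⟩
    | skip
  -- the only row of `[x, z, y]` that is not a subword of `[z, x, y]` is `[x, z]`
  exact ⟨[x, y], by simp, by simpa [IsRow], rfl, by simp [BoundedBy]; omega⟩

theorem rowsFitInto_knuth_right {x y z : ℕ} (h1 : x < y) (h2 : y ≤ z) :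
    RowsFitInto [y, x, z] [y, z, x] ∧ RowsFitInto [y, z, x] [y, x, z] := by
  constructor <;> intro l hl hrow <;>
    rcases eq_of_sublist_triple hl with rfl | rfl | rfl | rfl | rfl | rfl | rfl | rfl <;>
    first
    | (simp [IsRow] at hrow; omega)
    | exact ⟨_, by simp, hrow, rfl, BoundedBy.refl _⟩
    | skip
  -- the only row of `[y, x, z]` that is not a subword of `[y, z, x]` is `[x, z]`
  exact ⟨[y, z], by simp, by simpa [IsRow], rfl, by simp [BoundedBy]; omega⟩

theorem KnuthStep.maxRowLength_eq {w w' : List ℕ} (h : KnuthStep w w') (k : ℕ) :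
    maxRowLength k w = maxRowLength k w' := by
  cases h with
  | left u v x y z h1 h2 =>
    obtain ⟨hfit, hfit'⟩ := rowsFitInto_knuth_left h1 h2
    exact (hfit.maxRowLength_le k u v).antisymm (hfit'.maxRowLength_le k u v)
  | right u v x y z h1 h2 =>
    obtain ⟨hfit, hfit'⟩ := rowsFitInto_knuth_right h1 h2
    exact (hfit.maxRowLength_le k u v).antisymm (hfit'.maxRowLength_le k u v)

theorem PlacticEq.maxRowLength_eq {w w' : List ℕ} (h : PlacticEq w w') (k : ℕ) :
    maxRowLength k w = maxRowLength k w' :=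
  h.eq_of_knuthStep (maxRowLength k) fun _ _ hs => hs.maxRowLength_eq k

theorem PS_zero (f : ℕ → ℕ) : PS f 0 = 0 := by simp [PS]

theorem PS_succ (f : ℕ → ℕ) (k : ℕ) : PS f (k + 1) = PS f k + f (k + 1) := by
  rw [PS, PS, Finset.sum_Icc_succ_top (by omega)]

theorem PS_mono (f : ℕ → ℕ) {a b : ℕ} (h : a ≤ b) : PS f a ≤ PS f b :=
  Finset.sum_le_sum_of_subset (Finset.Icc_subset_Icc_right h)

theorem countP_le_succ (l : List ℕ) (k : ℕ) :
    l.countP (· ≤ k + 1) = l.countP (· ≤ k) + l.count (k + 1) := by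
  induction l with
  | nil => simp
  | cons a l ih =>
    simp only [List.countP_cons, List.count_cons, ih, beq_iff_eq, decide_eq_true_eq]
    split_ifs <;> omega

theorem PS_count {l : List ℕ} (h : ∀ a ∈ l, 1 ≤ a) (k : ℕ) :
    PS (fun j => l.count j) k = l.countP (· ≤ k) := by
  induction k with
  | zero =>
    rw [PS_zero, eq_comm, List.countP_eq_zero]
    intro a ha
    have := h a ha
    simp only [decide_eq_true_eq]
    omega
  | succ k ih => rw [PS_succ, countP_le_succ, ih]

theorem countP_lt_add_countP {l : List ℕ} {t k : ℕ} (h : t ≤ k + 1) :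
    l.countP (· < t) + l.countP (fun b => t ≤ b ∧ b ≤ k) = l.countP (· ≤ k) := by
  induction l with
  | nil => simp
  | cons a l ih =>
    simp only [List.countP_cons, decide_eq_true_eq]
    split_ifs <;> omega

theorem List.Sublist.length_le_countP {α : Type*} {l w : List α} {p : α → Bool}
    (hl : l.Sublist w) (hp : ∀ a ∈ l, p a) : l.length ≤ w.countP p :=
  List.countP_eq_length.2 hp ▸ hl.countP_le

section capX

variable (W Z : ℕ → ℕ)

theorem capX_succ {p : ℕ} (hp : 1 ≤ p) :
    capX W Z (p + 1) = min (PS Z p) (capX W Z p + W (p + 1)) := by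
  simp [capX, Nat.pos_iff_ne_zero.1 hp]

theorem capX_le_PS : ∀ p : ℕ, capX W Z p ≤ PS Z (p - 1)
  | 0 | 1 => Nat.zero_le _
  | p + 2 => by
    rw [capX_succ W Z (by omega)]
    exact min_le_left _ _

theorem capX_succ_le : ∀ p : ℕ, capX W Z (p + 1) ≤ capX W Z p + W (p + 1)
  | 0 => Nat.zero_le _
  | p + 1 => by
    rw [capX_succ W Z (by omega)]
    exact min_le_right _ _

theorem capX_add_PS_le {t k : ℕ} (htk : t ≤ k) :
    capX W Z k + PS W t ≤ PS W k + PS Z (t - 1) := by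
  induction k, htk using Nat.le_induction with
  | base =>
    have := capX_le_PS W Z t
    omega
  | succ k _ ih =>
    have := capX_succ_le W Z k
    have := PS_succ W k
    omega

theorem exists_capX_add_PS_eq : ∀ k : ℕ, 1 ≤ k →
    ∃ t, 1 ≤ t ∧ t ≤ k ∧ capX W Z k + PS W t = PS W k + PS Z (t - 1)
  | 0, h => absurd h (by omega)
  | 1, _ => ⟨1, le_rfl, le_rfl, by simp [capX, PS_zero]⟩
  | k + 2, _ => by
    obtain ⟨t, ht1, htk, heq⟩ := exists_capX_add_PS_eq (k + 1) (by omega)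
    have hPS : PS W (k + 2) = PS W (k + 1) + W (k + 2) := PS_succ W (k + 1)
    have hcap : capX W Z (k + 2) = min (PS Z (k + 1)) (capX W Z (k + 1) + W (k + 2)) :=
      capX_succ W Z (by omega)
    rw [hcap]
    rcases le_total (PS Z (k + 1)) (capX W Z (k + 1) + W (k + 2)) with h | h
    · refine ⟨k + 2, by omega, le_rfl, ?_⟩
      rw [min_eq_left h, show k + 2 - 1 = k + 1 from rfl]
      omega
    · exact ⟨t, ht1, by omega, by rw [min_eq_right h]; omega⟩

end capX

theorem IsRow.bounds_of_append_cons {l₁ l₂ : List ℕ} {t : ℕ} (h : IsRow (l₁ ++ t :: l₂)) :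
    (∀ a ∈ l₁, a ≤ t) ∧ ∀ b ∈ l₂, t ≤ b := by
  rw [IsRow, List.pairwise_append, List.pairwise_cons] at h
  exact ⟨fun a ha => h.2.2 a ha t List.mem_cons_self, h.2.1.1⟩

theorem countP_lt_eq_PS_pred {S : List ℕ} {Z : ℕ → ℕ} (hZ : ∀ k, PS Z k = S.countP (· ≤ k))
    {t : ℕ} (ht : 1 ≤ t) : S.countP (· < t) = PS Z (t - 1) := by
  rw [hZ]
  exact List.countP_congr fun b _ => by simp only [decide_eq_true_eq]; omega

section TwoRows

variable {R S : List ℕ} {W Z : ℕ → ℕ}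

theorem maxRowLength_append_add_capX_le (hS1 : ∀ a ∈ S, 1 ≤ a)
    (hW : ∀ k, PS W k = R.countP (· ≤ k)) (hZ : ∀ k, PS Z k = S.countP (· ≤ k)) (k : ℕ) :
    maxRowLength k (R ++ S) + capX W Z k ≤ PS W k + PS Z k := by
  obtain ⟨l, hl, hrow, hk, hlen⟩ := exists_maxRowLength k (R ++ S)
  obtain ⟨l₁, l₂, rfl, h₁, h₂⟩ := List.sublist_append_iff.1 hl
  rw [← hlen, List.length_append]
  cases l₂ with
  | nil =>
    have hl₁ := h₁.length_le_countP (p := (· ≤ k)) fun a ha => by simpa using hk a (by simp [ha])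
    have := capX_le_PS W Z k
    have := PS_mono Z (Nat.sub_le k 1)
    rw [← hW] at hl₁
    simp only [List.length_nil]
    omega
  | cons t l₂ =>
    have ht1 : 1 ≤ t := hS1 t (h₂.subset List.mem_cons_self)
    have htk : t ≤ k := hk t (by simp)
    obtain ⟨hle, hge⟩ := hrow.bounds_of_append_cons
    have hl₁ := h₁.length_le_countP (p := (· ≤ t)) fun a ha => by simpa using hle a ha
    have hl₂ := h₂.length_le_countP (p := fun b => t ≤ b ∧ b ≤ k) fun b hb => by
      rcases List.mem_cons.1 hb with rfl | hb
      · simpa using htk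
      · simpa using ⟨hge b hb, hk b (by simp [hb])⟩
    have hsplit := countP_lt_add_countP (l := S) (show t ≤ k + 1 by omega)
    rw [countP_lt_eq_PS_pred hZ ht1, ← hZ] at hsplit
    rw [← hW] at hl₁
    have := capX_add_PS_le W Z htk
    omega

theorem le_maxRowLength_append_add_capX (hR : IsRow R) (hS : IsRow S)
    (hW : ∀ k, PS W k = R.countP (· ≤ k)) (hZ : ∀ k, PS Z k = S.countP (· ≤ k)) (k : ℕ) :
    PS W k + PS Z k ≤ maxRowLength k (R ++ S) + capX W Z k := by
  rcases Nat.eq_zero_or_pos k with rfl | hk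
  · simp [PS_zero]
  obtain ⟨t, ht1, htk, heq⟩ := exists_capX_add_PS_eq W Z k hk
  set l₁ := R.filter (· ≤ t)
  set l₂ := S.filter fun b => t ≤ b ∧ b ≤ k
  have hrow : IsRow (l₁ ++ l₂) := by
    rw [IsRow, List.pairwise_append]
    refine ⟨hR.filter _, hS.filter _, fun a ha b hb => ?_⟩
    simp only [l₁, l₂, List.mem_filter, decide_eq_true_eq] at ha hb
    omega
  have hbound : ∀ a ∈ l₁ ++ l₂, a ≤ k := by
    simp only [l₁, l₂, List.mem_append, List.mem_filter, decide_eq_true_eq]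
    omega
  have hlen := le_maxRowLength (List.filter_sublist.append List.filter_sublist) hrow hbound
  have hsplit := countP_lt_add_countP (l := S) (show t ≤ k + 1 by omega)
  rw [countP_lt_eq_PS_pred hZ ht1, ← hZ] at hsplit
  simp only [List.length_append, ← List.countP_eq_length_filter, ← hW] at hlen
  omega

theorem maxRowLength_append_add_capX (hR : IsRow R) (hS : IsRow S) (hS1 : ∀ a ∈ S, 1 ≤ a)
    (hW : ∀ k, PS W k = R.countP (· ≤ k)) (hZ : ∀ k, PS Z k = S.countP (· ≤ k)) (k : ℕ) :
    maxRowLength k (R ++ S) + capX W Z k = PS W k + PS Z k :=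
  (maxRowLength_append_add_capX_le hS1 hW hZ k).antisymm
    (le_maxRowLength_append_add_capX hR hS hW hZ k)

end TwoRows

theorem maxRowLength_tableau {A B : List ℕ} (hB : IsRow B) (hdom : Dominates A B) (k : ℕ) :
    maxRowLength k (A ++ B) = B.countP (· ≤ k) := by
  refine le_antisymm ?_ ?_
  · obtain ⟨l, hl, hrow, hk, hlen⟩ := exists_maxRowLength k (A ++ B)
    obtain ⟨l₁, l₂, rfl, h₁, h₂⟩ := List.sublist_append_iff.1 hl
    rw [← hlen, List.length_append]
    cases l₂ with
    | nil =>
      have hl₁ := h₁.length_le_countP (p := (· ≤ k)) fun a ha => by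
        simpa using hk a (by simp [ha])
      have := hdom.countP_le k
      have : B.countP (· < k) ≤ B.countP (· ≤ k) :=
        List.countP_mono_left fun b _ hb => by simp only [decide_eq_true_eq] at hb ⊢; omega
      simp only [List.length_nil]
      omega
    | cons t l₂ =>
      have htk : t ≤ k := hk t (by simp)
      obtain ⟨hle, hge⟩ := hrow.bounds_of_append_cons
      have hl₁ := h₁.length_le_countP (p := (· ≤ t)) fun a ha => by simpa using hle a ha
      have hl₂ := h₂.length_le_countP (p := fun b => t ≤ b ∧ b ≤ k) fun b hb => by
        rcases List.mem_cons.1 hb with rfl | hb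
        · simpa using htk
        · simpa using ⟨hge b hb, hk b (by simp [hb])⟩
      have := hdom.countP_le t
      have := countP_lt_add_countP (l := B) (show t ≤ k + 1 by omega)
      omega
  · rw [List.countP_eq_length_filter]
    refine le_maxRowLength (List.filter_sublist.trans (List.sublist_append_right A B))
      (hB.filter _) fun a ha => ?_
    simpa using (List.mem_filter.1 ha).2

theorem count_eq_of_placticEq_tableau {R S A B : List ℕ} (hR : IsRow R) (hS : IsRow S)
    (hR1 : ∀ a ∈ R, 1 ≤ a) (hS1 : ∀ a ∈ S, 1 ≤ a) (hB : IsRow B) (hdom : Dominates A B)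
    (heq : PlacticEq (R ++ S) (A ++ B)) {i : ℕ} (hi : 1 ≤ i) :
    A.count i = xcomp (fun j => R.count j) (fun j => S.count j) i ∧
    B.count i = ycomp (fun j => R.count j) (fun j => S.count j) i := by
  have hW := PS_count hR1
  have hZ := PS_count hS1
  have hA : ∀ k, A.countP (· ≤ k) = capX (fun j => R.count j) (fun j => S.count j) k := by
    intro k
    have htotal := heq.perm.countP_eq (· ≤ k)
    have hrows := maxRowLength_append_add_capX hR hS hS1 hW hZ k
    rw [heq.maxRowLength_eq, maxRowLength_tableau hB hdom, hW, hZ] at hrows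
    rw [List.countP_append, List.countP_append] at htotal
    omega
  have htotal := heq.perm.count_eq i
  rw [List.count_append, List.count_append] at htotal
  obtain ⟨j, rfl⟩ : ∃ j, i = j + 1 := ⟨i - 1, by omega⟩
  have hsucc := countP_le_succ A j
  rw [hA, hA] at hsucc
  simp only [xcomp, ycomp, Nat.add_sub_cancel]
  omega

theorem placticEq_cons_append_singleton {a b : ℕ} {Q : List ℕ} (hab : a < b) (hQ : IsRow Q)
    (hbQ : ∀ c ∈ Q, b ≤ c) : PlacticEq (b :: (Q ++ [a])) (b :: a :: Q) := by
  induction Q generalizing b with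
  | nil => exact PlacticEq.refl _
  | cons q Q ih =>
    rw [IsRow, List.pairwise_cons] at hQ
    have hbq : b ≤ q := hbQ q List.mem_cons_self
    have hslide := (ih (hab.trans_le hbq) hQ.2 hQ.1).append_left [b]
    have hknuth := PlacticEq.of_knuthStep (KnuthStep.right [] Q a b q hab hbq)
    simp only [List.nil_append, List.cons_append] at hslide hknuth ⊢
    exact hslide.trans hknuth.symm

theorem placticEq_append_cons_cons {a b : ℕ} {P : List ℕ} (v : List ℕ) (hab : a < b)
    (hP : IsRow P) (hPa : ∀ c ∈ P, c ≤ a) : PlacticEq (P ++ b :: a :: v) (b :: (P ++ a :: v)) := by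
  induction P with
  | nil => exact PlacticEq.refl _
  | cons p P ih =>
    rw [IsRow, List.pairwise_cons] at hP
    have hslide := (ih hP.2 fun c hc => hPa c (List.mem_cons_of_mem p hc)).append_left [p]
    have hpa := hPa p List.mem_cons_self
    have hknuth : PlacticEq (p :: b :: (P ++ a :: v)) (b :: p :: (P ++ a :: v)) := by
      cases P with
      | nil => simpa using PlacticEq.of_knuthStep (KnuthStep.left [] v p a b hpa hab)
      | cons p' P =>
        have hp'a := hPa p' (by simp)
        simpa using PlacticEq.of_knuthStep
          (KnuthStep.left [] (P ++ a :: v) p p' b (hP.1 p' List.mem_cons_self) (hp'a.trans_lt hab))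
    simp only [List.cons_append] at hslide ⊢
    exact hslide.trans hknuth

theorem placticEq_bump {P Q : List ℕ} {b s : ℕ} (hB : IsRow (P ++ b :: Q))
    (hP : ∀ c ∈ P, c ≤ s) (hsb : s < b) : PlacticEq (P ++ b :: Q ++ [s]) (b :: (P ++ s :: Q)) := by
  rw [IsRow, List.pairwise_append, List.pairwise_cons] at hB
  have hrow := hB.1
  have hQ := (placticEq_cons_append_singleton hsb hB.2.1.2 hB.2.1.1).append_left P
  simp only [List.append_assoc, List.cons_append]
  exact hQ.trans (placticEq_append_cons_cons Q hsb hrow hP)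

theorem forall_le_or_exists_append_cons (B : List ℕ) (s : ℕ) :
    (∀ c ∈ B, c ≤ s) ∨ ∃ P b Q, B = P ++ b :: Q ∧ (∀ c ∈ P, c ≤ s) ∧ s < b := by
  induction B with
  | nil => exact Or.inl (by simp)
  | cons c B ih =>
    by_cases hc : c ≤ s
    · rcases ih with hB | ⟨P, b, Q, rfl, hP, hsb⟩
      · exact Or.inl (by simpa [hc] using hB)
      · exact Or.inr ⟨c :: P, b, Q, rfl, by simpa [hc] using hP, hsb⟩
    · exact Or.inr ⟨[], c, B, rfl, by simp, not_le.1 hc⟩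

/-- `A·B` is a tableau such that row-inserting any letter `s ≥ t` into `B` bumps a letter that can
be appended to `A`. -/
structure AcceptsFrom (t : ℕ) (A B : List ℕ) : Prop where
  isRow_left : IsRow A
  isRow_right : IsRow B
  dominates : Dominates A B
  length_le : A.length ≤ B.countP (· ≤ t)
  le_of_lt : ∀ a ∈ A, ∀ c ∈ B, t < c → a ≤ c

namespace AcceptsFrom

variable {t s : ℕ} {A B : List ℕ}

theorem mono {t' : ℕ} (h : AcceptsFrom t A B) (htt' : t ≤ t') : AcceptsFrom t' A B where
  isRow_left := h.isRow_left
  isRow_right := h.isRow_right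
  dominates := h.dominates
  length_le := h.length_le.trans <|
    List.countP_mono_left fun c _ hc => by simp only [decide_eq_true_eq] at hc ⊢; omega
  le_of_lt a ha c hc htc := h.le_of_lt a ha c hc (htt'.trans_lt htc)

theorem append_singleton (h : AcceptsFrom s A B) (hB : ∀ c ∈ B, c ≤ s) :
    AcceptsFrom s A (B ++ [s]) where
  isRow_left := h.isRow_left
  isRow_right := List.pairwise_append.2 ⟨h.isRow_right, List.pairwise_singleton _ _,
    fun c hc _ hs => (List.mem_singleton.1 hs) ▸ hB c hc⟩
  dominates := h.dominates.append_right _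
  length_le := h.length_le.trans (List.sublist_append_left B [s]).countP_le
  le_of_lt a ha c hc hsc := by
    rcases List.mem_append.1 hc with hc | hc
    · exact h.le_of_lt a ha c hc hsc
    · rw [List.mem_singleton.1 hc] at hsc
      exact absurd hsc (lt_irrefl s)

theorem length_le_of_append_cons {P Q : List ℕ} {b : ℕ} (h : AcceptsFrom s A (P ++ b :: Q))
    (hP : ∀ c ∈ P, c ≤ s) (hsb : s < b) : A.length ≤ P.length := by
  have hB := h.isRow_right
  rw [IsRow, List.pairwise_append, List.pairwise_cons] at hB
  have hlen := h.length_le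
  have hbQ : (b :: Q).countP (· ≤ s) = 0 :=
    List.countP_eq_zero.2 fun c hc => by
      rcases List.mem_cons.1 hc with rfl | hc
      · simpa using hsb
      · simpa using hsb.trans_le (hB.2.1.1 c hc)
  rw [List.countP_append, hbQ, List.countP_eq_length.2 (by simpa using hP)] at hlen
  omega

theorem bump {P Q : List ℕ} {b : ℕ} (h : AcceptsFrom s A (P ++ b :: Q))
    (hP : ∀ c ∈ P, c ≤ s) (hsb : s < b) : AcceptsFrom s (A ++ [b]) (P ++ s :: Q) := by
  have hB := h.isRow_right
  rw [IsRow, List.pairwise_append, List.pairwise_cons] at hB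
  obtain ⟨hProw, ⟨hbQ, hQrow⟩, hPbQ⟩ := hB
  have hAb : ∀ a ∈ A, a ≤ b := fun a ha => h.le_of_lt a ha b (by simp) hsb
  have hcountP : P.countP (· ≤ s) = P.length := List.countP_eq_length.2 (by simpa using hP)
  have hAP := h.length_le_of_append_cons hP hsb
  refine ⟨List.pairwise_append.2 ⟨h.isRow_left, List.pairwise_singleton _ _, ?_⟩,
    List.pairwise_append.2 ⟨hProw, List.pairwise_cons.2 ⟨?_, hQrow⟩, ?_⟩, ?_, ?_, ?_⟩
  · simpa using hAb
  · exact fun c hc => hsb.le.trans (hbQ c hc)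
  · intro a ha c hc
    rcases List.mem_cons.1 hc with rfl | hc
    · exact hP a ha
    · exact hPbQ a ha c (List.mem_cons_of_mem b hc)
  · have hdom : Dominates (A ++ [b]) (P ++ [s]) :=
      ((h.dominates.of_append_right hAP).append_right [s]).append_singleton (by simp; omega)
        fun c hc => by
          rcases List.mem_append.1 hc with hc | hc
          · exact (hP c hc).trans_lt hsb
          · rwa [List.mem_singleton.1 hc]
    simpa using hdom.append_right Q
  · simp only [List.countP_append, hcountP, List.countP_cons, le_refl, decide_true, if_true,
      List.length_append, List.length_singleton]
    omega
  · intro a ha c hc hsc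
    have hcQ : c ∈ Q := by
      rcases List.mem_append.1 hc with hc | hc
      · exact absurd (hP c hc) (not_le.2 hsc)
      · rcases List.mem_cons.1 hc with rfl | hc
        · exact absurd hsc (lt_irrefl c)
        · exact hc
    rcases List.mem_append.1 ha with ha | ha
    · exact h.le_of_lt a ha c (by simp [hcQ]) hsc
    · rw [List.mem_singleton.1 ha]
      exact hbQ c hcQ

theorem exists_insert (h : AcceptsFrom s A B) :
    ∃ A' B', PlacticEq (A ++ B ++ [s]) (A' ++ B') ∧ AcceptsFrom s A' B' := by
  rcases forall_le_or_exists_append_cons B s with hB | ⟨P, b, Q, rfl, hP, hsb⟩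
  · exact ⟨A, B ++ [s], by rw [List.append_assoc]; exact PlacticEq.refl _,
      h.append_singleton hB⟩
  · refine ⟨A ++ [b], P ++ s :: Q, ?_, h.bump hP hsb⟩
    simpa using (placticEq_bump h.isRow_right hP hsb).append_left A

theorem exists_insert_row {T : List ℕ} (h : AcceptsFrom t A B) (hT : IsRow T)
    (htT : ∀ s ∈ T, t ≤ s) :
    ∃ t' A' B', PlacticEq (A ++ B ++ T) (A' ++ B') ∧ AcceptsFrom t' A' B' := by
  induction T generalizing t A B with
  | nil => exact ⟨t, A, B, by rw [List.append_nil]; exact PlacticEq.refl _, h⟩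
  | cons s T ih =>
    rw [IsRow, List.pairwise_cons] at hT
    obtain ⟨A₁, B₁, heq₁, h₁⟩ := (h.mono (htT s List.mem_cons_self)).exists_insert
    obtain ⟨t', A', B', heq, h'⟩ := ih h₁ hT.2 hT.1
    refine ⟨t', A', B', ?_, h'⟩
    simpa using (heq₁.append [] T).trans heq

end AcceptsFrom

theorem exists_tableau_placticEq {R S : List ℕ} (hR : IsRow R) (hS : IsRow S) :
    ∃ A B, IsRow A ∧ IsRow B ∧ Dominates A B ∧ PlacticEq (R ++ S) (A ++ B) := by
  have hstart : AcceptsFrom 0 [] R :=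
    ⟨List.Pairwise.nil, hR, dominates_nil R, Nat.zero_le _, by simp⟩
  obtain ⟨_, A, B, heq, h⟩ := hstart.exists_insert_row hS fun s _ => Nat.zero_le s
  exact ⟨A, B, h.isRow_left, h.isRow_right, h.dominates, by simpa using heq⟩

theorem IsRow.eq_of_count_eq {l l' : List ℕ} (hl : IsRow l) (hl' : IsRow l')
    (h1 : ∀ a ∈ l, 1 ≤ a) (h1' : ∀ a ∈ l', 1 ≤ a) (h : ∀ i, 1 ≤ i → l.count i = l'.count i) :
    l = l' := by
  refine List.Perm.eq_of_pairwise' hl hl' (List.perm_iff_count.2 fun i => ?_)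
  rcases Nat.eq_zero_or_pos i with rfl | hi
  · rw [List.count_eq_zero.2 fun h0 => by simpa using h1 0 h0,
      List.count_eq_zero.2 fun h0 => by simpa using h1' 0 h0]
  · exact h i hi

theorem eq_of_placticEq_tableau {R S A B A' B' : List ℕ} (hR : IsRow R) (hS : IsRow S)
    (hR1 : ∀ a ∈ R, 1 ≤ a) (hS1 : ∀ a ∈ S, 1 ≤ a)
    (hA : IsRow A) (hB : IsRow B) (hdom : Dominates A B) (heq : PlacticEq (R ++ S) (A ++ B))
    (hA' : IsRow A') (hB' : IsRow B') (hdom' : Dominates A' B')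
    (heq' : PlacticEq (R ++ S) (A' ++ B')) : A = A' ∧ B = B' := by
  have hRS : ∀ a ∈ R ++ S, 1 ≤ a := fun a ha => (List.mem_append.1 ha).elim (hR1 a) (hS1 a)
  have hAB := heq.forall_mem hRS
  have hAB' := heq'.forall_mem hRS
  have hc {i} (hi : 1 ≤ i) := count_eq_of_placticEq_tableau hR hS hR1 hS1 hB hdom heq hi
  have hc' {i} (hi : 1 ≤ i) := count_eq_of_placticEq_tableau hR hS hR1 hS1 hB' hdom' heq' hi
  constructor
  · exact hA.eq_of_count_eq hA' (fun a ha => hAB a (List.mem_append_left B ha))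
      (fun a ha => hAB' a (List.mem_append_left B' ha)) fun i hi => (hc hi).1.trans (hc' hi).1.symm
  · exact hB.eq_of_count_eq hB' (fun a ha => hAB a (List.mem_append_right A ha))
      (fun a ha => hAB' a (List.mem_append_right A' ha)) fun i hi => (hc hi).2.trans (hc' hi).2.symm

/-- For any two rows `R, S` on `{1, …, n}` there are unique rows `R', S'`
(with `R'` possibly empty) such that `R·S ≡ R'·S'` in the plactic monoid and
`R'·S'` is a Young tableau; moreover `R', S'` are given by the vector
insertion algorithm applied to the multiplicity vectors of `(R, S)`. -/
theorem unique_tableau_of_two_rows (n : ℕ) (R S : List ℕ)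
    (hR : IsRow R) (hS : IsRow S)
    (hRm : ∀ a ∈ R, 1 ≤ a ∧ a ≤ n) (hSm : ∀ a ∈ S, 1 ≤ a ∧ a ≤ n) :
    (∃! p : List ℕ × List ℕ,
      IsRow p.1 ∧ IsRow p.2 ∧
      (∀ a ∈ p.1, 1 ≤ a ∧ a ≤ n) ∧ (∀ a ∈ p.2, 1 ≤ a ∧ a ≤ n) ∧
      (p.1 = [] ∨ Dominates p.1 p.2) ∧
      PlacticEq (R ++ S) (p.1 ++ p.2)) ∧
    (∀ p : List ℕ × List ℕ,
      (IsRow p.1 ∧ IsRow p.2 ∧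
        (∀ a ∈ p.1, 1 ≤ a ∧ a ≤ n) ∧ (∀ a ∈ p.2, 1 ≤ a ∧ a ≤ n) ∧
        (p.1 = [] ∨ Dominates p.1 p.2) ∧
        PlacticEq (R ++ S) (p.1 ++ p.2)) →
      ∀ i, 1 ≤ i → i ≤ n →
        p.1.count i = xcomp (fun j => R.count j) (fun j => S.count j) i ∧
        p.2.count i = ycomp (fun j => R.count j) (fun j => S.count j) i) := by
  have hR1 : ∀ a ∈ R, 1 ≤ a := fun a ha => (hRm a ha).1
  have hS1 : ∀ a ∈ S, 1 ≤ a := fun a ha => (hSm a ha).1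
  have hRS : ∀ a ∈ R ++ S, 1 ≤ a ∧ a ≤ n :=
    fun a ha => (List.mem_append.1 ha).elim (hRm a) (hSm a)
  obtain ⟨A, B, hA, hB, hdom, heq⟩ := exists_tableau_placticEq hR hS
  have hAB := heq.forall_mem hRS
  refine ⟨⟨(A, B), ⟨hA, hB, fun a ha => hAB a (List.mem_append_left B ha),
    fun a ha => hAB a (List.mem_append_right A ha), Or.inr hdom, heq⟩, ?_⟩, ?_⟩
  · rintro ⟨A', B'⟩ ⟨hA', hB', -, -, hdom', heq'⟩
    obtain ⟨rfl, rfl⟩ := eq_of_placticEq_tableau hR hS hR1 hS1 hA' hB'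
      (dominates_of_eq_nil_or hdom') heq' hA hB hdom heq
    rfl
  · rintro ⟨A', B'⟩ ⟨-, hB', -, -, hdom', heq'⟩ i hi -
    exact count_eq_of_placticEq_tableau hR hS hR1 hS1 hB' (dominates_of_eq_nil_or hdom') heq' hi
end
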